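/- arXiv:1905.03600 — 5 statements merged into one kernel-verified Lean document; each statement's English description precedes it below -/
import Mathlib

section
/- Let N be a nonnegative-integer-valued random variable with E[N] = c where c is not an integer, write m = ⌊c⌋ and r = c - ⌊c⌋, and let p ∈ (0,1). Then E[(1-p)^N] ≥ (1-r)(1-p)^m + r(1-p)^{m+1}, i.e., the two-point distribution supported on {⌊c⌋, ⌈c⌉} with P(N=⌈c⌉) = c - ⌊c⌋ minimizes E[(1-p)^N] among all distributions with mean c. -/
/-!
For `0 ≤ q ≤ 1` the sequence `n ↦ q ^ n` is convex, so it lies above the line through its values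
at `m` and `m + 1` at every natural number (the open interval `(m, m + 1)` contains none). That
line is affine in `n`, so its expectation under any law with mean `c` is its value at `c`, which for
`m = ⌊c⌋` is the value of the two-point law on `{⌊c⌋, ⌊c⌋ + 1}` with mean `c`.
-/

lemma pow_mul_one_sub_le_pow_add {q : ℝ} (hq : 0 ≤ q) (m k : ℕ) :
    q ^ m * (1 - (1 - q) * k) ≤ q ^ (m + k) := by
  have bernoulli : 1 + k * (q - 1) ≤ (1 + (q - 1)) ^ k := one_add_mul_le_pow (by linarith) k
  rw [add_sub_cancel] at bernoulli
  rw [pow_add]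
  exact mul_le_mul_of_nonneg_left (by linarith) (pow_nonneg hq m)

lemma pow_mul_one_add_le_one {q : ℝ} (hq0 : 0 ≤ q) (hq1 : q ≤ 1) (k : ℕ) :
    q ^ k * (1 + k * (1 - q)) ≤ 1 :=
  calc q ^ k * (1 + k * (1 - q))
      ≤ q ^ k * (1 + (1 - q)) ^ k :=
        mul_le_mul_of_nonneg_left (one_add_mul_le_pow (by linarith) k) (pow_nonneg hq0 k)
    _ = (1 - (1 - q) ^ 2) ^ k := by rw [← mul_pow]; ring
    _ ≤ 1 := pow_le_one₀ (by nlinarith) (by nlinarith)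

lemma pow_mul_secant_le_pow {q : ℝ} (hq0 : 0 ≤ q) (hq1 : q ≤ 1) (m n : ℕ) :
    q ^ m * (1 - (1 - q) * ((n : ℝ) - m)) ≤ q ^ n := by
  rcases le_or_gt m n with hmn | hnm
  · obtain ⟨k, rfl⟩ := Nat.exists_eq_add_of_le hmn
    simpa using pow_mul_one_sub_le_pow_add hq0 m k
  · obtain ⟨k, rfl⟩ := Nat.exists_eq_add_of_le hnm.le
    calc q ^ (n + k) * (1 - (1 - q) * ((n : ℝ) - (n + k : ℕ)))
        = q ^ n * (q ^ k * (1 + k * (1 - q))) := by push_cast; ring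
      _ ≤ q ^ n * 1 :=
        mul_le_mul_of_nonneg_left (pow_mul_one_add_le_one hq0 hq1 k) (pow_nonneg hq0 n)
      _ = q ^ n := mul_one _

lemma pow_mul_secant_le_tsum_mul_pow {q : ℝ} (hq0 : 0 ≤ q) (hq1 : q ≤ 1) (m : ℕ) {c : ℝ}
    {f : ℕ → ℝ} (hf : ∀ n, 0 ≤ f n) (hsum : ∑' n, f n = 1)
    (hmean_summable : Summable (fun n : ℕ => (n : ℝ) * f n))
    (hmean : ∑' n : ℕ, (n : ℝ) * f n = c) :
    q ^ m * (1 - (1 - q) * (c - m)) ≤ ∑' n, f n * q ^ n := by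
  have hf_summable : Summable f := by
    by_contra h
    rw [tsum_eq_zero_of_not_summable h] at hsum
    exact zero_ne_one hsum
  set A := q ^ m * (1 + (1 - q) * m)
  set B := q ^ m * (1 - q)
  have secant_summable : Summable (fun n : ℕ => A * f n - B * ((n : ℝ) * f n)) :=
    (hf_summable.mul_left A).sub (hmean_summable.mul_left B)
  have moment_summable : Summable (fun n : ℕ => f n * q ^ n) :=
    hf_summable.of_nonneg_of_le (fun n => mul_nonneg (hf n) (pow_nonneg hq0 n))
      (fun n => mul_le_of_le_one_right (hf n) (pow_le_one₀ hq0 hq1))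
  have pointwise (n : ℕ) : A * f n - B * ((n : ℝ) * f n) ≤ f n * q ^ n :=
    calc A * f n - B * ((n : ℝ) * f n) = f n * (q ^ m * (1 - (1 - q) * ((n : ℝ) - m))) := by
          ring
      _ ≤ f n * q ^ n := mul_le_mul_of_nonneg_left (pow_mul_secant_le_pow hq0 hq1 m n) (hf n)
  calc q ^ m * (1 - (1 - q) * (c - m)) = A * 1 - B * c := by ring
    _ = ∑' n : ℕ, (A * f n - B * ((n : ℝ) * f n)) := by
      rw [(hf_summable.mul_left A).tsum_sub (hmean_summable.mul_left B), tsum_mul_left,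
        tsum_mul_left, hsum, hmean]
    _ ≤ ∑' n, f n * q ^ n := secant_summable.tsum_le_tsum pointwise moment_summable

theorem two_point_minimizes_exponential_moment_general
    (p : ℝ) (hp : 0 < p) (hp1 : p < 1) (c : ℝ)
    (f : ℕ → ℝ) (hf : ∀ n, 0 ≤ f n) (hsum : ∑' n : ℕ, f n = 1)
    (hmean_summable : Summable (fun n : ℕ => (n : ℝ) * f n))
    (hmean : ∑' n : ℕ, (n : ℝ) * f n = c) :
    (1 - (c - ⌊c⌋₊)) * (1 - p) ^ ⌊c⌋₊ + (c - ⌊c⌋₊) * (1 - p) ^ (⌊c⌋₊ + 1)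
      ≤ ∑' n : ℕ, f n * (1 - p) ^ n := by
  calc (1 - (c - ⌊c⌋₊)) * (1 - p) ^ ⌊c⌋₊ + (c - ⌊c⌋₊) * (1 - p) ^ (⌊c⌋₊ + 1)
      = (1 - p) ^ ⌊c⌋₊ * (1 - (1 - (1 - p)) * (c - ⌊c⌋₊)) := by ring
    _ ≤ ∑' n : ℕ, f n * (1 - p) ^ n :=
      pow_mul_secant_le_tsum_mul_pow (by linarith) (by linarith) ⌊c⌋₊ hf hsum hmean_summable hmean

/-- If `N` has mean `c` which is not an integer, with `m = ⌊c⌋` and `r = c - ⌊c⌋`,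
then `E[(1-p)^N] ≥ (1-r)(1-p)^m + r(1-p)^(m+1)`. -/
theorem two_point_minimizes_exponential_moment
    (p : ℝ) (hp : 0 < p) (hp1 : p < 1) (c : ℝ) (hc : 0 < c)
    (hci : (⌊c⌋₊ : ℝ) ≠ c)
    (f : ℕ → ℝ) (hf : ∀ n, 0 ≤ f n) (hsum : ∑' n : ℕ, f n = 1)
    (hmean_summable : Summable (fun n : ℕ => (n : ℝ) * f n))
    (hmean : ∑' n : ℕ, (n : ℝ) * f n = c) :
    (1 - (c - ⌊c⌋₊)) * (1 - p) ^ ⌊c⌋₊ + (c - ⌊c⌋₊) * (1 - p) ^ (⌊c⌋₊ + 1)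
      ≤ ∑' n : ℕ, f n * (1 - p) ^ n :=
  two_point_minimizes_exponential_moment_general p hp hp1 c f hf hsum hmean_summable hmean
end

section
/- For any convex function φ : ℝ → ℝ and any nonnegative-integer-valued random variable N with E[N] = c, one has E[φ(N)] ≥ (⌈c⌉ - c)·φ(⌊c⌋) + (c - ⌊c⌋)·φ(⌈c⌉). (When c is an integer this right-hand side equals φ(c).) -/
/-! With `m = ⌊c⌋`, a convex `φ` lies above the line through `(m, φ m)` and `(m + 1, φ (m + 1))`
at every point outside `(m, m + 1)`, in particular at every natural number. Averaging this affine
lower bound against the law of `N` evaluates the line at the mean `c`, which is the left-hand side.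
-/

theorem ConvexOn.slope_mul_sub_add_le {𝕜 : Type*} [Field 𝕜] [LinearOrder 𝕜] [IsStrictOrderedRing 𝕜]
    {s : Set 𝕜} {f : 𝕜 → 𝕜} {a b x : 𝕜} (hf : ConvexOn 𝕜 s f) (ha : a ∈ s) (hb : b ∈ s)
    (hx : x ∈ s) (hab : a < b) (hx_out : x ∉ Set.Ioo a b) :
    slope f a b * (x - a) + f a ≤ f x := by
  have hb' : b ∈ s \ {a} := ⟨hb, hab.ne'⟩
  have hchord : f x = slope f a x * (x - a) + f a := by
    simpa [mul_comm] using (sub_smul_slope_vadd f a x).symm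
  rcases lt_trichotomy x a with hxa | rfl | hax
  · have := hf.slope_mono ha ⟨hx, hxa.ne⟩ hb' (hxa.trans hab).le
    rw [hchord]
    nlinarith
  · simp
  · have hbx : b ≤ x := not_lt.1 fun hxb => hx_out ⟨hax, hxb⟩
    have := hf.slope_mono ha hb' ⟨hx, hax.ne'⟩ hbx
    rw [hchord]
    nlinarith

theorem hasSum_mul_affine {ι : Type*} {f g : ι → ℝ} {c : ℝ} (hf : HasSum f 1)
    (hg : HasSum (fun i => g i * f i) c) (α β : ℝ) :
    HasSum (fun i => f i * (α * g i + β)) (α * c + β) := by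
  have h := (hg.mul_left α).add (hf.mul_left β)
  rw [mul_one] at h
  have hfun : (fun i => f i * (α * g i + β)) = fun i => α * (g i * f i) + β * f i := by
    funext i; ring
  exact hfun ▸ h

theorem convex_interpolation_lower_bound_general
    (φ : ℝ → ℝ) (hφ : ConvexOn ℝ Set.univ φ) (c : ℝ)
    (f : ℕ → ℝ) (hf : ∀ n, 0 ≤ f n) (hsum : ∑' n : ℕ, f n = 1)
    (hmean_summable : Summable (fun n : ℕ => (n : ℝ) * f n))
    (hmean : ∑' n : ℕ, (n : ℝ) * f n = c)
    (hφ_summable : Summable (fun n : ℕ => f n * φ n)) :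
    (1 - (c - ⌊c⌋₊)) * φ ⌊c⌋₊ + (c - ⌊c⌋₊) * φ (⌊c⌋₊ + 1)
      ≤ ∑' n : ℕ, f n * φ n := by
  set m : ℝ := (⌊c⌋₊ : ℝ)
  have hf_summable : Summable f := by
    by_contra h
    simp [tsum_eq_zero_of_not_summable h] at hsum
  have hchord (n : ℕ) : f n * (slope φ m (m + 1) * (n - m) + φ m) ≤ f n * φ n := by
    refine mul_le_mul_of_nonneg_left (hφ.slope_mul_sub_add_le trivial trivial trivial
      (lt_add_one m) fun ⟨hmn, hnm⟩ => ?_) (hf n)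
    simp only [m, ← Nat.cast_add_one, Nat.cast_lt] at hmn hnm
    omega
  have hline := hasSum_mul_affine (hsum ▸ hf_summable.hasSum)
    (hmean ▸ hmean_summable.hasSum) (slope φ m (m + 1)) (φ m - slope φ m (m + 1) * m)
  have hslope : slope φ m (m + 1) = φ (m + 1) - φ m := by simp [slope_def_field]
  calc (1 - (c - m)) * φ m + (c - m) * φ (m + 1)
      = slope φ m (m + 1) * c + (φ m - slope φ m (m + 1) * m) := by rw [hslope]; ring
    _ ≤ ∑' n : ℕ, f n * φ n :=
      hasSum_le (fun n => (by ring : _ = _).trans_le (hchord n)) hline hφ_summable.hasSum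

/-- Jensen-type bound: for convex `φ` and a nonnegative-integer-valued random variable `N`
with mean `c`, `E[φ(N)] ≥ (⌈c⌉ - c)·φ(⌊c⌋) + (c - ⌊c⌋)·φ(⌈c⌉)`, where the right-hand side
is the linear interpolation of `φ` between `⌊c⌋` and `⌊c⌋ + 1` evaluated at `c`
(which equals `φ(c)` when `c` is an integer). -/
theorem convex_interpolation_lower_bound
    (φ : ℝ → ℝ) (hφ : ConvexOn ℝ Set.univ φ) (c : ℝ) (hc : 0 ≤ c)
    (f : ℕ → ℝ) (hf : ∀ n, 0 ≤ f n) (hsum : ∑' n : ℕ, f n = 1)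
    (hmean_summable : Summable (fun n : ℕ => (n : ℝ) * f n))
    (hmean : ∑' n : ℕ, (n : ℝ) * f n = c)
    (hφ_summable : Summable (fun n : ℕ => f n * φ n)) :
    (1 - (c - ⌊c⌋₊)) * φ ⌊c⌋₊ + (c - ⌊c⌋₊) * φ (⌊c⌋₊ + 1)
      ≤ ∑' n : ℕ, f n * φ n :=
  convex_interpolation_lower_bound_general φ hφ c f hf hsum hmean_summable hmean hφ_summable
end

section
/- Suppose N is a nonnegative-integer-valued random variable with mean c and p ∈ (0,1). If E[(1-p)^N] = (⌈c⌉ - c)(1-p)^{⌊c⌋} + (c - ⌊c⌋)(1-p)^{⌈c⌉} (i.e., N attains the minimum), and c is not an integer, then P(N = ⌊c⌋) = ⌈c⌉ - c and P(N = ⌈c⌉) = c - ⌊c⌋; if c is an integer, then P(N = c) = 1. -/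
/-!
With `q = 1 - p`, let `ℓ` be the chord of `x ↦ q ^ x` through the points `m` and `m + 1`, where
`m = ⌊c⌋₊`. Since `ℓ` is affine, `E[ℓ(N)] = ℓ(E N) = ℓ(c)`, which is the right-hand side of the
hypothesis. By strict convexity `q ^ n > ℓ(n)` at every integer `n ∉ {m, m + 1}`, so
`E[q ^ N - ℓ(N)] = 0` with a nonnegative integrand forces `N ∈ {m, m + 1}` almost surely; the two
remaining probabilities are then determined by total mass `1` and mean `c`.
-/

open Set Real

section SecantLine

variable {𝕜 : Type*} [Field 𝕜] [LinearOrder 𝕜] [IsStrictOrderedRing 𝕜] {s : Set 𝕜} {f : 𝕜 → 𝕜}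

theorem StrictConvexOn.secant_lt_of_notMem_Icc (hf : StrictConvexOn 𝕜 s f) {a b x : 𝕜}
    (ha : a ∈ s) (hb : b ∈ s) (hx : x ∈ s) (hab : a < b) (hxab : x ∉ Icc a b) :
    (b - x) * f a + (x - a) * f b < (b - a) * f x := by
  rcases not_and_or.mp hxab with hxa | hbx
  · linear_combination hf.secant_strict_mono_aux1 hx hb (not_le.mp hxa) hab
  · linear_combination hf.secant_strict_mono_aux1 ha hx hab (not_le.mp hbx)

end SecantLine

theorem strictConvexOn_rpow_left {b : ℝ} (hb₀ : 0 < b) (hb₁ : b ≠ 1) :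
    StrictConvexOn ℝ univ fun x : ℝ => b ^ x := by
  refine ⟨convex_univ, fun x _ y _ hxy s t hs ht hst => ?_⟩
  have hlog : log b ≠ 0 := log_ne_zero_of_pos_of_ne_one hb₀ hb₁
  have := strictConvexOn_exp.2 (mem_univ (log b * x)) (mem_univ (log b * y))
    (by simpa [hlog] using hxy) hs ht hst
  simp only [smul_eq_mul, rpow_def_of_pos hb₀] at this ⊢
  convert this using 2
  ring

def powChord (q : ℝ) (m : ℕ) (x : ℝ) : ℝ :=
  (1 - (x - m)) * q ^ m + (x - m) * q ^ (m + 1)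

theorem powChord_lt_pow {q : ℝ} (hq₀ : 0 < q) (hq₁ : q ≠ 1) {m n : ℕ} (hnm : n ≠ m)
    (hnm₁ : n ≠ m + 1) : powChord q m n < q ^ n := by
  have hn : (n : ℝ) ∉ Icc (m : ℝ) (m + 1) := by
    rintro ⟨hmn, hnm'⟩
    have : m ≤ n ∧ n ≤ m + 1 := ⟨by exact_mod_cast hmn, by exact_mod_cast hnm'⟩
    omega
  have := (strictConvexOn_rpow_left hq₀ hq₁).secant_lt_of_notMem_Icc (mem_univ _) (mem_univ _)
    (mem_univ _) (lt_add_one (m : ℝ)) hn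
  simp only [← Nat.cast_add_one, rpow_natCast] at this
  rw [powChord]
  push_cast at this
  linarith

theorem powChord_le_pow {q : ℝ} (hq₀ : 0 < q) (hq₁ : q ≠ 1) (m n : ℕ) :
    powChord q m n ≤ q ^ n := by
  by_cases hnm : n = m
  · simp [powChord, hnm]
  by_cases hnm₁ : n = m + 1
  · simp [powChord, hnm₁]
  exact (powChord_lt_pow hq₀ hq₁ hnm hnm₁).le

theorem hasSum_mul_powChord {f : ℕ → ℝ} {c : ℝ} (hf : HasSum f 1)
    (hmean : HasSum (fun n : ℕ => (n : ℝ) * f n) c) (q : ℝ) (m : ℕ) :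
    HasSum (fun n : ℕ => f n * powChord q m n) (powChord q m c) := by
  have hchord : powChord q m c = powChord q m 0 * 1 + (q ^ (m + 1) - q ^ m) * c := by
    simp only [powChord]
    ring
  rw [hchord]
  refine ((hf.mul_left _).add (hmean.mul_left _)).congr_fun fun n => ?_
  simp only [powChord]
  ring

theorem eq_zero_of_hasSum_mul_eq {ι : Type*} {f g h : ι → ℝ} {a : ℝ} (hf : ∀ i, 0 ≤ f i)
    (hgh : ∀ i, g i ≤ h i) (hg : HasSum (fun i => f i * g i) a)
    (hh : HasSum (fun i => f i * h i) a) {i : ι} (hi : g i < h i) : f i = 0 := by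
  have hgap : HasSum (fun i => f i * (h i - g i)) 0 := by
    simpa [mul_sub] using hh.sub hg
  have := congrFun ((hasSum_zero_iff_of_nonneg fun j =>
    mul_nonneg (hf j) (sub_nonneg.mpr (hgh j))).mp hgap) i
  simpa [(sub_pos.mpr hi).ne'] using this

theorem eq_of_hasSum_of_support_subset_pair {f : ℕ → ℝ} {c : ℝ} {m : ℕ} (hf : HasSum f 1)
    (hmean : HasSum (fun n : ℕ => (n : ℝ) * f n) c)
    (hsupp : ∀ n, n ≠ m → n ≠ m + 1 → f n = 0) :
    f m = 1 - (c - m) ∧ f (m + 1) = c - m := by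
  have hout : ∀ n ∉ ({m, m + 1} : Finset ℕ), f n = 0 := by
    simp only [Finset.mem_insert, Finset.mem_singleton, not_or]
    exact fun n hn => hsupp n hn.1 hn.2
  have hmass := hf.unique (hasSum_sum_of_ne_finset_zero hout)
  have hmoment := hmean.unique (hasSum_sum_of_ne_finset_zero (s := {m, m + 1}) fun n hn => by
    simp [hout n hn])
  rw [Finset.sum_pair (by omega)] at hmass hmoment
  push_cast at hmoment
  constructor <;> nlinarith

theorem minimizer_unique_general
    (p c : ℝ) (hp : 0 < p) (hp1 : p < 1)
    (f : ℕ → ℝ) (hf : ∀ n, 0 ≤ f n) (hsum : ∑' n : ℕ, f n = 1)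
    (hmean_summable : Summable (fun n : ℕ => (n : ℝ) * f n))
    (hmean : ∑' n : ℕ, (n : ℝ) * f n = c)
    (hmin : ∑' n : ℕ, f n * (1 - p) ^ n
      = (1 - (c - ⌊c⌋₊)) * (1 - p) ^ ⌊c⌋₊ + (c - ⌊c⌋₊) * (1 - p) ^ (⌊c⌋₊ + 1)) :
    ((⌊c⌋₊ : ℝ) ≠ c → f ⌊c⌋₊ = 1 - (c - ⌊c⌋₊) ∧ f (⌊c⌋₊ + 1) = c - ⌊c⌋₊) ∧
    ((⌊c⌋₊ : ℝ) = c → f ⌊c⌋₊ = 1) := by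
  have hq₀ : 0 < 1 - p := by linarith
  have hq₁ : 1 - p ≠ 1 := by linarith
  have hsummable : Summable f := by
    by_contra h
    simp [tsum_eq_zero_of_not_summable h] at hsum
  have hmass : HasSum f 1 := hsum ▸ hsummable.hasSum
  have hmoment : HasSum (fun n : ℕ => (n : ℝ) * f n) c := hmean ▸ hmean_summable.hasSum
  have hpow : HasSum (fun n => f n * (1 - p) ^ n) (powChord (1 - p) ⌊c⌋₊ c) := by
    have hsummable' : Summable (fun n => f n * (1 - p) ^ n) :=
      hsummable.of_nonneg_of_le (fun n => mul_nonneg (hf n) (pow_nonneg hq₀.le n))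
        fun n => mul_le_of_le_one_right (hf n) (pow_le_one₀ hq₀.le (by linarith))
    rw [powChord, ← hmin]
    exact hsummable'.hasSum
  have hsupp : ∀ n, n ≠ ⌊c⌋₊ → n ≠ ⌊c⌋₊ + 1 → f n = 0 := fun n hn hn₁ =>
    eq_zero_of_hasSum_mul_eq hf (powChord_le_pow hq₀ hq₁ _) (hasSum_mul_powChord hmass hmoment _ _)
      hpow (powChord_lt_pow hq₀ hq₁ hn hn₁)
  obtain ⟨hfloor, hceil⟩ := eq_of_hasSum_of_support_subset_pair hmass hmoment hsupp
  exact ⟨fun _ => ⟨hfloor, hceil⟩, fun hc => by rw [hfloor, hc, sub_self, sub_zero]⟩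

/-- Uniqueness of the minimizing distribution: if a pmf `f` on `ℕ` with mean `c` attains the
minimal exponential moment `(1-r)(1-p)^⌊c⌋ + r(1-p)^(⌊c⌋+1)` (with `r = c - ⌊c⌋`), then:
if `c` is not an integer, `f` is the two-point distribution on `{⌊c⌋, ⌈c⌉}` with
`P(N = ⌈c⌉) = c - ⌊c⌋`; and if `c` is an integer, `f` is the point mass at `c`. -/
theorem minimizer_unique
    (p c : ℝ) (hp : 0 < p) (hp1 : p < 1) (hc : 0 ≤ c)
    (f : ℕ → ℝ) (hf : ∀ n, 0 ≤ f n) (hsum : ∑' n : ℕ, f n = 1)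
    (hmean_summable : Summable (fun n : ℕ => (n : ℝ) * f n))
    (hmean : ∑' n : ℕ, (n : ℝ) * f n = c)
    (hmin : ∑' n : ℕ, f n * (1 - p) ^ n
      = (1 - (c - ⌊c⌋₊)) * (1 - p) ^ ⌊c⌋₊ + (c - ⌊c⌋₊) * (1 - p) ^ (⌊c⌋₊ + 1)) :
    ((⌊c⌋₊ : ℝ) ≠ c → f ⌊c⌋₊ = 1 - (c - ⌊c⌋₊) ∧ f (⌊c⌋₊ + 1) = c - ⌊c⌋₊) ∧
    ((⌊c⌋₊ : ℝ) = c → f ⌊c⌋₊ = 1) :=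
  minimizer_unique_general p c hp hp1 f hf hsum hmean_summable hmean hmin
end

section
/- Let X be a Poisson random variable with mean c > 0 and p ∈ (0,1). Then E[(1-p)^X] = e^{-pc}, and e^{-pc} > (⌈c⌉ - c)(1-p)^{⌊c⌋} + (c - ⌊c⌋)(1-p)^{⌈c⌉} whenever c is not an integer or c ≥ 1; i.e., Poisson dispatching yields a strictly lower detection probability than the optimal two-point dispatch distribution. -/
/-! With `m = ⌊c⌋₊` and `r = c - m`, the two-point moment factors as `(1 - p) ^ m * (1 - p * r)`
while `exp (-(p * c)) = exp (-p) ^ m * exp (-(p * r))`; compare factor by factor with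
`1 + x ≤ exp x`, which is strict for `x ≠ 0`. -/

open Real

lemma hasSum_poisson_mul_pow (c x : ℝ) :
    HasSum (fun n : ℕ ↦ (exp (-c) * c ^ n / n.factorial) * x ^ n) (exp (c * (x - 1))) := by
  have h := (NormedSpace.expSeries_div_hasSum_exp (c * x)).mul_left (exp (-c))
  rw [← Real.exp_eq_exp_ℝ, ← exp_add] at h
  have hterm : (fun n : ℕ ↦ (exp (-c) * c ^ n / n.factorial) * x ^ n) =
      fun n ↦ exp (-c) * ((c * x) ^ n / n.factorial) := by
    ext n
    rw [mul_pow]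
    ring
  rwa [hterm, show c * (x - 1) = -c + c * x by ring]

lemma mul_lt_mul_of_le_of_le_of_lt_or_lt {a b A B : ℝ} (ha : 0 ≤ a) (hA : 0 < A) (hB : 0 < B)
    (haA : a ≤ A) (hbB : b ≤ B) (hstrict : a < A ∨ b < B) : a * b < A * B := by
  rcases le_or_gt b 0 with hb | hb
  · exact (mul_nonpos_of_nonneg_of_nonpos ha hb).trans_lt (mul_pos hA hB)
  rcases hstrict with haA' | hbB'
  · exact mul_lt_mul haA' hbB hb hA.le
  · exact mul_lt_mul' haA hbB' hb.le hA

lemma one_sub_pow_mul_one_sub_mul_lt_exp {p r : ℝ} {m : ℕ} (hp : p ≠ 0) (hp1 : p ≤ 1)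
    (hmr : m ≠ 0 ∨ r ≠ 0) : (1 - p) ^ m * (1 - p * r) < exp (-(p * (m + r))) := by
  have hp' : 1 - p < exp (-p) := by linarith [add_one_lt_exp (neg_ne_zero.mpr hp)]
  have hpr : 1 - p * r ≤ exp (-(p * r)) := by linarith [add_one_le_exp (-(p * r))]
  have hpow : (1 - p) ^ m ≤ exp (-p) ^ m := pow_le_pow_left₀ (by linarith) hp'.le m
  rw [mul_add, neg_add, exp_add, ← mul_comm (m : ℝ), neg_mul_eq_mul_neg, exp_nat_mul]
  refine mul_lt_mul_of_le_of_le_of_lt_or_lt (pow_nonneg (by linarith) m) (by positivity)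
    (exp_pos _) hpow hpr ?_
  rcases hmr with hm | hr
  · exact .inl (pow_lt_pow_left₀ hp' (by linarith) hm)
  · exact .inr (by linarith [add_one_lt_exp (neg_ne_zero.mpr (mul_ne_zero hp hr))])

theorem poisson_strictly_suboptimal_general
    (c p : ℝ) (hp : 0 < p) (hp1 : p < 1)
    (h : (⌊c⌋₊ : ℝ) ≠ c ∨ 1 ≤ c) :
    (∑' n : ℕ, (Real.exp (-c) * c ^ n / n.factorial) * (1 - p) ^ n = Real.exp (-(p * c))) ∧
    Real.exp (-(p * c))
      > (1 - (c - ⌊c⌋₊)) * (1 - p) ^ ⌊c⌋₊ + (c - ⌊c⌋₊) * (1 - p) ^ (⌊c⌋₊ + 1) := by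
  refine ⟨by rw [(hasSum_poisson_mul_pow c (1 - p)).tsum_eq]; ring_nf, ?_⟩
  have hmr : ⌊c⌋₊ ≠ 0 ∨ c - ⌊c⌋₊ ≠ 0 := by
    rcases h with hne | hge
    · exact .inr (sub_ne_zero.mpr hne.symm)
    · exact .inl (Nat.one_le_iff_ne_zero.mp (Nat.one_le_floor_iff c |>.mpr hge))
  calc (1 - (c - ⌊c⌋₊)) * (1 - p) ^ ⌊c⌋₊ + (c - ⌊c⌋₊) * (1 - p) ^ (⌊c⌋₊ + 1)
      = (1 - p) ^ ⌊c⌋₊ * (1 - p * (c - ⌊c⌋₊)) := by ring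
    _ < exp (-(p * (⌊c⌋₊ + (c - ⌊c⌋₊)))) :=
      one_sub_pow_mul_one_sub_mul_lt_exp hp.ne' hp1.le hmr
    _ = exp (-(p * c)) := by ring_nf

/-- For `X ~ Poisson(c)`, `E[(1-p)^X] = e^(-pc)`, and this strictly exceeds the minimal
exponential moment `(1-r)(1-p)^⌊c⌋ + r(1-p)^(⌊c⌋+1)` (with `r = c - ⌊c⌋`) whenever `c` is not
an integer or `c ≥ 1`. -/
theorem poisson_strictly_suboptimal
    (c p : ℝ) (hc : 0 < c) (hp : 0 < p) (hp1 : p < 1)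
    (h : (⌊c⌋₊ : ℝ) ≠ c ∨ 1 ≤ c) :
    (∑' n : ℕ, (Real.exp (-c) * c ^ n / n.factorial) * (1 - p) ^ n = Real.exp (-(p * c))) ∧
    Real.exp (-(p * c))
      > (1 - (c - ⌊c⌋₊)) * (1 - p) ^ ⌊c⌋₊ + (c - ⌊c⌋₊) * (1 - p) ^ (⌊c⌋₊ + 1) :=
  poisson_strictly_suboptimal_general c p hp hp1 h
end

section
/- Under the optimal patrol strategy (blue patrollers at jt + kΔ, red at jt with probability r, independently), for every attack start time s ≥ 0 the number N(s) of patrollers dispatched in (s, s+t] satisfies P(N(s) = m+1) = r and P(N(s) = m) = 1 - r, where m = ⌊λt⌋ and r = λt - m. Hence the detection probability 1 - E[(1-p)^{N(s)}] = 1 - r(1-p)^{m+1} - (1-r)(1-p)^m for every s. -/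
open MeasureTheory

lemma red_unique (t : ℝ) (ht : 0 < t) (s : ℝ) (hs : 0 ≤ s) (j : ℕ) :
    (s < (j : ℝ) * t ∧ (j : ℝ) * t ≤ s + t) ↔ j = ⌊s / t⌋₊ + 1 := by
  set j0 : ℕ := ⌊s / t⌋₊ + 1 with hj0
  have h1 : s / t < (j0 : ℝ) := by
    rw [hj0]; push_cast
    exact Nat.lt_floor_add_one (s / t)
  have h2 : (j0 : ℝ) ≤ s / t + 1 := by
    rw [hj0]; push_cast
    have := Nat.floor_le (div_nonneg hs ht.le)
    linarith
  constructor
  · rintro ⟨ha, hb⟩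
    have ha' : s / t < (j : ℝ) := (div_lt_iff₀ ht).mpr (by linarith)
    have hb' : (j : ℝ) ≤ s / t + 1 := by
      rw [div_add' _ _ _ ht.ne', le_div_iff₀ ht]; linarith
    have l1 : (j : ℝ) < (j0 : ℝ) + 1 := by linarith
    have l2 : (j0 : ℝ) < (j : ℝ) + 1 := by linarith
    have l1' : j < j0 + 1 := by exact_mod_cast l1
    have l2' : j0 < j + 1 := by exact_mod_cast l2
    omega
  · rintro rfl
    constructor
    · have := (div_lt_iff₀ ht).mp h1; linarith
    · have : (j0 : ℝ) * t ≤ (s / t + 1) * t := by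
        exact mul_le_mul_of_nonneg_right h2 ht.le
      rw [add_mul, div_mul_cancel₀ _ ht.ne'] at this
      linarith

lemma blue_ncard (t : ℝ) (ht : 0 < t) (m : ℕ) (s : ℝ) (hs : 0 ≤ s) :
    {q : ℕ × ℕ | 1 ≤ q.2 ∧ q.2 ≤ m ∧
      s < (q.1 : ℝ) * t + (q.2 : ℝ) * (t / (m + 1)) ∧
      (q.1 : ℝ) * t + (q.2 : ℝ) * (t / (m + 1)) ≤ s + t}.ncard = m := by
  set d : ℝ := t / (m + 1) with hd
  have hm1 : (0 : ℝ) < (m : ℝ) + 1 := by positivity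
  have hd0 : 0 < d := div_pos ht hm1
  have hkd : ∀ k : ℕ, k ≤ m → (k : ℝ) * d < t := by
    intro k hk
    have h1 : (k : ℝ) * d ≤ (m : ℝ) * d := by
      apply mul_le_mul_of_nonneg_right _ hd0.le
      exact_mod_cast hk
    have h2 : (m : ℝ) * d < t := by
      rw [hd, mul_div_assoc', div_lt_iff₀ hm1]
      nlinarith
    linarith
  set g : ℕ → ℕ := fun k => (⌊(s - (k : ℝ) * d) / t⌋ + 1).toNat with hg
  have hgk : ∀ k : ℕ, 1 ≤ k → k ≤ m → ((g k : ℝ) = (⌊(s - (k : ℝ) * d) / t⌋ : ℝ) + 1) := by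
    intro k hk1 hkm
    have hx : (-1 : ℝ) < (s - (k : ℝ) * d) / t := by
      rw [lt_div_iff₀ ht]
      have := hkd k hkm
      nlinarith
    have hfl : (0 : ℤ) ≤ ⌊(s - (k : ℝ) * d) / t⌋ + 1 := by
      have : (-1 : ℤ) ≤ ⌊(s - (k : ℝ) * d) / t⌋ := by
        rw [Int.le_floor]; push_cast; linarith
      omega
    have h2 : ((⌊(s - (k : ℝ) * d) / t⌋ + 1).toNat : ℤ) = ⌊(s - (k : ℝ) * d) / t⌋ + 1 :=
      Int.toNat_of_nonneg hfl
    exact_mod_cast congrArg (fun z : ℤ => (z : ℝ)) h2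
  have hcond : ∀ k : ℕ, 1 ≤ k → k ≤ m → ∀ j : ℕ,
      ((s < (j : ℝ) * t + (k : ℝ) * d ∧ (j : ℝ) * t + (k : ℝ) * d ≤ s + t) ↔ j = g k) := by
    intro k hk1 hkm j
    set x : ℝ := (s - (k : ℝ) * d) / t with hx
    have hxj : ∀ j : ℕ, (s < (j : ℝ) * t + (k : ℝ) * d ↔ x < j) := by
      intro j
      rw [hx, div_lt_iff₀ ht]; constructor <;> intro <;> linarith
    have hxj2 : ∀ j : ℕ, ((j : ℝ) * t + (k : ℝ) * d ≤ s + t ↔ (j : ℝ) ≤ x + 1) := by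
      intro j
      rw [hx, div_add' _ _ _ ht.ne', le_div_iff₀ ht]
      constructor <;> intro <;> nlinarith
    rw [hxj, hxj2]
    constructor
    · rintro ⟨ha, hb⟩
      have hfloor : (⌊x⌋ : ℝ) ≤ x := Int.floor_le x
      have hfloor2 : x < (⌊x⌋ : ℝ) + 1 := Int.lt_floor_add_one x
      have l1 : (j : ℝ) < (⌊x⌋ : ℝ) + 2 := by linarith
      have l2 : (⌊x⌋ : ℝ) + 1 < (j : ℝ) + 1 := by linarith
      have hgc := hgk k hk1 hkm
      have : (j : ℝ) = (g k : ℝ) := by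
        rw [hgc]
        have l1' : (j : ℤ) < ⌊x⌋ + 2 := by exact_mod_cast l1
        have l2' : ⌊x⌋ + 1 < (j : ℤ) + 1 := by exact_mod_cast l2
        have : (j : ℤ) = ⌊x⌋ + 1 := by omega
        push_cast [this]; push_cast; exact_mod_cast congrArg (Int.cast : ℤ → ℝ) this
      exact_mod_cast this
    · rintro rfl
      have hgc := hgk k hk1 hkm
      rw [hgc]
      exact ⟨by linarith [Int.lt_floor_add_one x], by linarith [Int.floor_le x]⟩
  have himg : {q : ℕ × ℕ | 1 ≤ q.2 ∧ q.2 ≤ m ∧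
      s < (q.1 : ℝ) * t + (q.2 : ℝ) * d ∧
      (q.1 : ℝ) * t + (q.2 : ℝ) * d ≤ s + t} = (fun k => (g k, k)) '' Set.Icc 1 m := by
    ext ⟨j, k⟩
    simp only [Set.mem_setOf_eq, Set.mem_image, Set.mem_Icc, Prod.mk.injEq]
    constructor
    · rintro ⟨h1, h2, h3, h4⟩
      exact ⟨k, ⟨h1, h2⟩, ((hcond k h1 h2 j).mp ⟨h3, h4⟩).symm, rfl⟩
    · rintro ⟨k', ⟨h1, h2⟩, rfl, rfl⟩
      exact ⟨h1, h2, (hcond k' h1 h2 (g k')).mpr rfl⟩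
  rw [himg, Set.ncard_image_of_injOn (fun a _ b _ h => (Prod.mk.injEq _ _ _ _ ▸ h).2),
    ← Finset.coe_Icc, Set.ncard_coe_finset, Nat.card_Icc]
  omega

/-- Under the optimal patrol strategy (blue patrollers at `jt + kΔ`, red patroller at each `jt`
with probability `r`, modelled by `{0,1}`-valued random variables `X j` with `P(X j = 1) = r`),
for every attack start time `s ≥ 0` the number `N(s)` of dispatches in `(s, s+t]` is `m+1` with
probability `r` and `m` with probability `1-r`, and the detection probability equals
`1 - r(1-p)^(m+1) - (1-r)(1-p)^m`. -/
theorem optimal_patrol_window_distribution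
    (lam t p : ℝ) (hl : 0 < lam) (ht : 0 < t) (hp : 0 < p) (hp1 : p ≤ 1)
    (hr : 0 < lam * t - ⌊lam * t⌋₊)
    {Ω : Type*} [MeasurableSpace Ω] (μ : Measure Ω) [IsProbabilityMeasure μ]
    (X : ℕ → Ω → ℕ) (hXmeas : ∀ j, Measurable (X j))
    (hX01 : ∀ j ω, X j ω ≤ 1)
    (hXr : ∀ j, μ {ω | X j ω = 1} = ENNReal.ofReal (lam * t - ⌊lam * t⌋₊))
    (N : ℝ → Ω → ℕ)
    (hN : ∀ s ω, N s ω =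
      {q : ℕ × ℕ | 1 ≤ q.2 ∧ q.2 ≤ ⌊lam * t⌋₊ ∧
        s < (q.1 : ℝ) * t + (q.2 : ℝ) * (t / (⌊lam * t⌋₊ + 1)) ∧
        (q.1 : ℝ) * t + (q.2 : ℝ) * (t / (⌊lam * t⌋₊ + 1)) ≤ s + t}.ncard
      + {j : ℕ | s < (j : ℝ) * t ∧ (j : ℝ) * t ≤ s + t ∧ X j ω = 1}.ncard) :
    ∀ s : ℝ, 0 ≤ s →
      μ {ω | N s ω = ⌊lam * t⌋₊ + 1} = ENNReal.ofReal (lam * t - ⌊lam * t⌋₊) ∧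
      μ {ω | N s ω = ⌊lam * t⌋₊} = ENNReal.ofReal (1 - (lam * t - ⌊lam * t⌋₊)) ∧
      ∫ ω, (1 - (1 - p) ^ (N s ω)) ∂μ
        = 1 - (lam * t - ⌊lam * t⌋₊) * (1 - p) ^ (⌊lam * t⌋₊ + 1)
            - (1 - (lam * t - ⌊lam * t⌋₊)) * (1 - p) ^ ⌊lam * t⌋₊ := by
  intro s hs
  set m : ℕ := ⌊lam * t⌋₊ with hm
  set r : ℝ := lam * t - m with hrdef
  have hlt : 0 ≤ lam * t := by positivity
  have hr0 : 0 ≤ r := hr.le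
  have hr1 : r ≤ 1 := by
    have := Nat.lt_floor_add_one (lam * t)
    rw [hrdef]; push_cast at this ⊢; linarith
  set j0 : ℕ := ⌊s / t⌋₊ + 1 with hj0
  set A : Set Ω := {ω | X j0 ω = 1} with hA
  have hAmeas : MeasurableSet A := hXmeas j0 (measurableSet_singleton 1)
  have hAmu : μ A = ENNReal.ofReal r := hXr j0
  -- pointwise value of N s
  have hNval : ∀ ω, N s ω = m + (if X j0 ω = 1 then 1 else 0) := by
    intro ω
    rw [hN s ω, blue_ncard t ht m s hs]
    congr 1
    have hset : {j : ℕ | s < (j : ℝ) * t ∧ (j : ℝ) * t ≤ s + t ∧ X j ω = 1}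
        = if X j0 ω = 1 then {j0} else ∅ := by
      split_ifs with h
      · ext j
        simp only [Set.mem_setOf_eq, Set.mem_singleton_iff]
        constructor
        · rintro ⟨h1, h2, _⟩
          exact (red_unique t ht s hs j).mp ⟨h1, h2⟩
        · rintro rfl
          obtain ⟨h1, h2⟩ := (red_unique t ht s hs j0).mpr rfl
          exact ⟨h1, h2, h⟩
      · ext j
        simp only [Set.mem_setOf_eq, Set.mem_empty_iff_false, iff_false, not_and]
        intro h1 h2 h3
        have hje : j = j0 := (red_unique t ht s hs j).mp ⟨h1, h2⟩
        rw [hje] at h3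
        exact h h3
    rw [hset]
    split_ifs with h
    · exact Set.ncard_singleton j0
    · exact Set.ncard_empty ℕ
  -- the two level sets of N s
  have hSet1 : {ω | N s ω = m + 1} = A := by
    ext ω
    simp only [Set.mem_setOf_eq, hNval ω, hA]
    split_ifs with h <;> simp [h]
  have hSet2 : {ω | N s ω = m} = Aᶜ := by
    ext ω
    simp only [Set.mem_setOf_eq, hNval ω, hA, Set.mem_compl_iff]
    split_ifs with h <;> simp [h]
  have hmuA : μ {ω | N s ω = m + 1} = ENNReal.ofReal r := by rw [hSet1, hAmu]
  have hmuAc : μ {ω | N s ω = m} = ENNReal.ofReal (1 - r) := by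
    rw [hSet2, measure_compl hAmeas (measure_ne_top μ A), hAmu, measure_univ,
      ← ENNReal.ofReal_one, ← ENNReal.ofReal_sub _ hr0]
  refine ⟨hmuA, hmuAc, ?_⟩
  -- integral computation
  set c1 : ℝ := (1 - p) ^ (m + 1) with hc1
  set c2 : ℝ := (1 - p) ^ m with hc2
  have hfun : (fun ω => (1 - p) ^ (N s ω))
      = fun ω => A.indicator (fun _ => c1) ω + Aᶜ.indicator (fun _ => c2) ω := by
    funext ω
    by_cases h : X j0 ω = 1
    · have hωA : ω ∈ A := h
      rw [Set.indicator_of_mem hωA, Set.indicator_of_notMem (by simpa using hωA),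
        hNval ω, if_pos h, add_zero]
    · have hωA : ω ∉ A := h
      rw [Set.indicator_of_notMem hωA, Set.indicator_of_mem (by simpa using hωA),
        hNval ω, if_neg h, zero_add, add_zero]
  have hint1 : Integrable (A.indicator (fun _ => c1)) μ :=
    (integrable_const c1).indicator hAmeas
  have hint2 : Integrable (Aᶜ.indicator (fun _ => c2)) μ :=
    (integrable_const c2).indicator hAmeas.compl
  have hg : Integrable (fun ω => (1 - p) ^ (N s ω)) μ := by
    rw [hfun]; exact hint1.add hint2
  have hintval : ∫ ω, (1 - p) ^ (N s ω) ∂μ = r * c1 + (1 - r) * c2 := by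
    rw [hfun, integral_add hint1 hint2, integral_indicator_const _ hAmeas,
      integral_indicator_const _ hAmeas.compl, measureReal_def, measureReal_def, hAmu, measure_compl hAmeas (measure_ne_top μ A),
      hAmu, measure_univ, ← ENNReal.ofReal_one, ← ENNReal.ofReal_sub _ hr0,
      ENNReal.toReal_ofReal hr0, ENNReal.toReal_ofReal (by linarith)]
    simp [smul_eq_mul]
  have : ∫ ω, (1 - (1 - p) ^ (N s ω)) ∂μ = 1 - (r * c1 + (1 - r) * c2) := by
    rw [integral_sub (integrable_const 1) hg, hintval, integral_const, measureReal_def, measure_univ,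
      ENNReal.toReal_one, smul_eq_mul, mul_one]
  rw [this]; ring
end
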